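/- Let α and β be nonempty finite types, let p be a probability vector on α, let C : α → β, let q be the pushforward of p along C, and define U : α → ℝ by U(a) = q(C(a)) / |{a' : C(a') = C(a)}| (the fiber of C(a) is nonempty since it contains a). Then the Shannon entropy of p is bounded above by the Shannon entropy of U: H(p) ≤ H(U). -/

import Mathlib

/-!
Within a single fiber of `C`, Jensen's inequality for the concave function `negMulLog` says
that replacing `p` by its average over the fiber can only increase the fiber's contribution
to the entropy. Summing over the fibers gives the theorem.
-/

open Finset

/-- Shannon entropy of a finitely supported distribution, `H(p) = ∑ a, -p a * log (p a)`,
with the convention `0 * log 0 = 0` via `Real.negMulLog`. -/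
noncomputable def entropy {α : Type*} [Fintype α] (p : α → ℝ) : ℝ :=
  ∑ a, Real.negMulLog (p a)

/-- Pushforward of `p : α → ℝ` along `C : α → β`: `q x = ∑_{a : C a = x} p a`. -/
noncomputable def pushforward {α β : Type*} [Fintype α] [DecidableEq β]
    (p : α → ℝ) (C : α → β) (x : β) : ℝ :=
  ∑ a ∈ Finset.univ.filter (fun a => C a = x), p a

open Real

section Jensen

variable {ι : Type*} (s : Finset ι) {p : ι → ℝ}

theorem sum_negMulLog_le_card_mul_negMulLog_average (hp : ∀ i ∈ s, 0 ≤ p i) :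
    ∑ i ∈ s, negMulLog (p i) ≤ #s * negMulLog ((∑ i ∈ s, p i) / #s) := by
  obtain rfl | hs := s.eq_empty_or_nonempty
  · simp
  have hcard : (0 : ℝ) < #s := by exact_mod_cast hs.card_pos
  have jensen := concaveOn_negMulLog.le_map_sum (t := s) (w := fun _ ↦ (#s : ℝ)⁻¹)
    (fun _ _ ↦ by positivity) (by simp [hcard.ne']) hp
  simp only [smul_eq_mul, ← mul_sum] at jensen
  rwa [← inv_mul_le_iff₀ hcard, div_eq_inv_mul]

theorem sum_negMulLog_le_of_eq_average {q : ι → ℝ} (hp : ∀ i ∈ s, 0 ≤ p i)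
    (hq : ∀ i ∈ s, q i = (∑ j ∈ s, p j) / #s) :
    ∑ i ∈ s, negMulLog (p i) ≤ ∑ i ∈ s, negMulLog (q i) := by
  rw [sum_congr rfl fun i hi ↦ congrArg negMulLog (hq i hi), sum_const, nsmul_eq_mul]
  exact sum_negMulLog_le_card_mul_negMulLog_average s hp

end Jensen

theorem entropy_le_entropy_uniform_mixture_general
    {α β : Type*} [Fintype α] [Fintype β] [DecidableEq β]
    (p : α → ℝ) (hp : ∀ a, 0 ≤ p a) (C : α → β)
    (U : α → ℝ)
    (hU : ∀ a, U a =
      pushforward p C (C a) / (Finset.univ.filter (fun a' => C a' = C a)).card) :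
    entropy p ≤ entropy U := by
  rw [entropy, entropy, ← sum_fiberwise univ C (fun a ↦ negMulLog (p a)),
    ← sum_fiberwise univ C (fun a ↦ negMulLog (U a))]
  refine sum_le_sum fun _ _ ↦ sum_negMulLog_le_of_eq_average _ (fun a _ ↦ hp a) fun a ha ↦ ?_
  obtain rfl := (mem_filter.1 ha).2
  exact hU a

/-- Theorem 1: the entropy of `p` is bounded above by the entropy of the distribution `U`
that places on each `a` the pushforward mass of its fiber divided by the fiber size. -/
theorem entropy_le_entropy_uniform_mixture
    {α β : Type*} [Fintype α] [Fintype β] [Nonempty α] [Nonempty β] [DecidableEq β]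
    (p : α → ℝ) (hp : ∀ a, 0 ≤ p a) (hsum : ∑ a, p a = 1) (C : α → β)
    (U : α → ℝ)
    (hU : ∀ a, U a =
      pushforward p C (C a) / (Finset.univ.filter (fun a' => C a' = C a)).card) :
    entropy p ≤ entropy U :=
  entropy_le_entropy_uniform_mixture_general p hp C U hU
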